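/- Let c, ρ, h ∈ (0,∞) and δ ∈ ℝ. Then Σ_{n=1}^{∞} n^{2ρδ} · e^{-c·n^{ρ}·h} ≥ 4^{-ρ·δ⁻} · ∫_1^{∞} x^{2ρδ} · e^{-2^{ρ}·c·x^{ρ}·h} dx. -/

import Mathlib

/-!
On `[k + 1, k + 2)` the point `y = 2k + 2` satisfies `x ≤ y ≤ 2x`, so `exp (-(2x)^ρ c h)` is at most
`exp (-y^ρ c h)` and `2^{min (2ρδ) 0} x^{2ρδ} ≤ y^{2ρδ}`, where `2^{min (2ρδ) 0} = 4^{-ρδ⁻}`.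
Hence the scaled integral over `[k + 1, k + 2)` is at most the summand at `n = 2k + 2`, and summing
over `k` bounds the scaled integral by the sum over even `n` alone.
-/

open MeasureTheory Filter Set Real Function Asymptotics

lemma iUnion_Ico_add_natCast {α : Type*} [Ring α] [LinearOrder α] [IsStrictOrderedRing α]
    [FloorSemiring α] (a : α) : ⋃ k : ℕ, Ico (a + k) (a + k + 1) = Ici a := by
  refine Subset.antisymm (iUnion_subset fun k x hx => ?_) fun x (hx : a ≤ x) => ?_
  · exact le_trans (le_add_of_nonneg_right k.cast_nonneg) hx.1
  · have hfloor := Nat.floor_le (sub_nonneg.2 hx)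
    have hlt := Nat.lt_floor_add_one (x - a)
    exact mem_iUnion.2 ⟨⌊x - a⌋₊, le_sub_iff_add_le'.1 hfloor,
      add_assoc a _ 1 ▸ sub_lt_iff_lt_add'.1 hlt⟩

lemma pairwise_disjoint_Ico_add_natCast {α : Type*} [Ring α] [PartialOrder α] [IsOrderedRing α]
    (a : α) :
    Pairwise (Disjoint on fun k : ℕ => Ico (a + k) (a + k + 1)) :=
  fun i j hij => by
    simpa only [onFun, Int.cast_natCast] using
      pairwise_disjoint_Ico_add_intCast a (Nat.cast_injective.ne hij : (i : ℤ) ≠ j)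

lemma setIntegral_Ici_le_tsum {f : ℝ → ℝ} {b : ℕ → ℝ} (a : ℝ) (hf : IntegrableOn f (Ici a))
    (hb : Summable b) (hfb : ∀ k : ℕ, ∀ x ∈ Ico (a + k) (a + k + 1), f x ≤ b k) :
    ∫ x in Ici a, f x ≤ ∑' k, b k := by
  rw [← iUnion_Ico_add_natCast a] at hf ⊢
  have hsum := hasSum_integral_iUnion (fun _ => measurableSet_Ico)
    (pairwise_disjoint_Ico_add_natCast a) hf
  refine hsum.tsum_eq ▸ hsum.summable.tsum_le_tsum (fun k => ?_) hb
  calc ∫ x in Ico (a + k) (a + k + 1), f x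
      ≤ ∫ _ in Ico (a + k) (a + k + 1), b k :=
        setIntegral_mono_on (hf.mono_set (subset_iUnion (fun k : ℕ => Ico (a + k) (a + k + 1)) k))
          (integrableOn_const measure_Ico_lt_top.ne) measurableSet_Ico (hfb k)
    _ = b k := by simp [measureReal_def, Real.volume_Ico]

lemma isLittleO_rpow_mul_exp_neg_mul_rpow {b ρ : ℝ} (hb : 0 < b) (hρ : 0 < ρ) (p q : ℝ) :
    (fun y : ℝ => y ^ p * exp (-b * y ^ ρ)) =o[atTop] fun y => y ^ q := by
  have hexp : (fun y : ℝ => exp (-b * y ^ ρ)) =o[atTop] fun y => y ^ (q - p) := by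
    refine ((isLittleO_exp_neg_mul_rpow_atTop hb ((q - p) / ρ)).comp_tendsto
      (tendsto_rpow_atTop hρ)).congr' .rfl ?_
    filter_upwards [eventually_ge_atTop 0] with y hy
    rw [Function.comp_apply, ← rpow_mul hy, mul_div_cancel₀ _ hρ.ne']
  refine ((isBigO_refl (fun y : ℝ => y ^ p) atTop).mul_isLittleO hexp).congr' .rfl ?_
  filter_upwards [eventually_gt_atTop 0] with y hy
  rw [← rpow_add hy, add_sub_cancel]

lemma summable_rpow_mul_exp_neg_mul_rpow {b ρ : ℝ} (hb : 0 < b) (hρ : 0 < ρ) (p : ℝ) :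
    Summable fun n : ℕ => ((n : ℝ) + 1) ^ p * exp (-b * ((n : ℝ) + 1) ^ ρ) := by
  have hshift : Tendsto (fun n : ℕ => (n : ℝ) + 1) atTop atTop :=
    tendsto_atTop_add_const_right _ 1 tendsto_natCast_atTop_atTop
  refine summable_of_isBigO_nat ?_
    ((isLittleO_rpow_mul_exp_neg_mul_rpow hb hρ p (-2)).comp_tendsto hshift).isBigO
  exact_mod_cast (summable_nat_add_iff 1).2 (summable_nat_rpow.2 (by norm_num : (-2 : ℝ) < -1))

lemma four_rpow_neg_mul_max_neg {ρ : ℝ} (hρ : 0 ≤ ρ) (δ : ℝ) :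
    (4 : ℝ) ^ (-(ρ * max (-δ) 0)) = 2 ^ min (2 * ρ * δ) 0 := by
  rw [show (4 : ℝ) = 2 ^ (2 : ℝ) by norm_num, ← rpow_mul zero_le_two]
  congr 1
  rcases le_total δ 0 with hδ | hδ
  · rw [max_eq_left (neg_nonneg.2 hδ), min_eq_left (by nlinarith)]
    ring
  · rw [max_eq_right (neg_nonpos.2 hδ), min_eq_right (by positivity)]
    ring

lemma two_rpow_min_zero_mul_rpow_le {x y : ℝ} (hx : 0 < x) (hxy : x ≤ y) (hy : y ≤ 2 * x)
    (p : ℝ) : 2 ^ min p 0 * x ^ p ≤ y ^ p := by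
  rcases le_total 0 p with hp | hp
  · rw [min_eq_right hp, rpow_zero, one_mul]
    exact rpow_le_rpow hx.le hxy hp
  · rw [min_eq_left hp, ← mul_rpow zero_le_two hx.le]
    exact rpow_le_rpow_of_nonpos (hx.trans_le hxy) hy hp

lemma rpow_mul_exp_neg_two_rpow_mul_le {x y b ρ : ℝ} (hx : 0 < x) (hxy : x ≤ y) (hy : y ≤ 2 * x)
    (hb : 0 ≤ b) (hρ : 0 ≤ ρ) (p : ℝ) :
    2 ^ min p 0 * (x ^ p * exp (-(2 ^ ρ * b) * x ^ ρ)) ≤ y ^ p * exp (-b * y ^ ρ) := by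
  have hexp : exp (-(2 ^ ρ * b) * x ^ ρ) ≤ exp (-b * y ^ ρ) := by
    have : y ^ ρ ≤ 2 ^ ρ * x ^ ρ :=
      mul_rpow zero_le_two hx.le ▸ rpow_le_rpow (hx.le.trans hxy) hy hρ
    exact exp_le_exp.2 (by nlinarith)
  rw [← mul_assoc]
  exact mul_le_mul (two_rpow_min_zero_mul_rpow_le hx hxy hy p) hexp (exp_nonneg _)
    (rpow_nonneg (hx.le.trans hxy) _)

/-- For `c, ρ, h ∈ (0,∞)` and `δ ∈ ℝ`:
`Σ_{n=1}^∞ n^{2ρδ} e^{-c n^ρ h} ≥ 4^{-ρδ⁻} ∫_1^∞ x^{2ρδ} e^{-2^ρ c x^ρ h} dx`. -/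
theorem stmt_5 (c ρ h : ℝ) (hc : 0 < c) (hρ : 0 < ρ) (hh : 0 < h) (δ : ℝ) :
    (∑' n : ℕ, ((n : ℝ) + 1) ^ (2 * ρ * δ) * Real.exp (-c * ((n : ℝ) + 1) ^ ρ * h))
      ≥ (4 : ℝ) ^ (-(ρ * max (-δ) 0))
          * ∫ x in Set.Ici (1 : ℝ),
              x ^ (2 * ρ * δ) * Real.exp (-((2 : ℝ) ^ ρ) * c * x ^ ρ * h) := by
  have hb : 0 < c * h := mul_pos hc hh
  have hsummand (y : ℝ) : -c * y ^ ρ * h = -(c * h) * y ^ ρ := by ring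
  have hintegrand (x : ℝ) : -(2 : ℝ) ^ ρ * c * x ^ ρ * h = -(2 ^ ρ * (c * h)) * x ^ ρ := by ring
  simp only [hsummand, hintegrand, four_rpow_neg_mul_max_neg hρ.le, ge_iff_le]
  set g : ℕ → ℝ := fun n => ((n : ℝ) + 1) ^ (2 * ρ * δ) * exp (-(c * h) * ((n : ℝ) + 1) ^ ρ)
  have hg : Summable g := summable_rpow_mul_exp_neg_mul_rpow hb hρ _
  have hg_nonneg (n : ℕ) : 0 ≤ g n := by positivity
  have hodd : Injective fun k : ℕ => 2 * k + 1 := fun i j hij => by simp_all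
  by_cases hint : IntegrableOn (fun x : ℝ => x ^ (2 * ρ * δ) * exp (-(2 ^ ρ * (c * h)) * x ^ ρ))
    (Ici 1)
  swap
  · rw [integral_undef hint, mul_zero]
    exact tsum_nonneg hg_nonneg
  calc _ = ∫ x in Ici 1, 2 ^ min (2 * ρ * δ) 0 *
        (x ^ (2 * ρ * δ) * exp (-(2 ^ ρ * (c * h)) * x ^ ρ)) := (integral_const_mul _ _).symm
    _ ≤ ∑' k, g (2 * k + 1) := by
      refine setIntegral_Ici_le_tsum 1 (hint.const_mul _) (hg.comp_injective hodd)
        fun k x ⟨hkx, hxk⟩ => ?_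
      have hk : (0 : ℝ) ≤ k := k.cast_nonneg
      exact rpow_mul_exp_neg_two_rpow_mul_le (by linarith) (by push_cast; linarith)
        (by push_cast; linarith) hb.le hρ.le _
    _ ≤ ∑' n, g n := tsum_comp_le_tsum_of_inj hg hg_nonneg hodd
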